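/- From the relation (i + i^{k+j})‖p_jψ‖² = (i + (−i)^{k+j})‖p_{j−1}ψ‖² for all j (with k ∈ {0,1,2,3} fixed), it follows that ‖p_{4l−k−1}ψ‖ = ‖p_{4l−k}ψ‖ for all l, and p_jψ = 0 whenever j ≡ 1−k or 2−k (mod 4). -/
import Mathlib


/-- from the relations
`(i + i^{k+j}) ‖p_j ψ‖² = (i + (−i)^{k+j}) ‖p_{j−1} ψ‖²` for all `j` (with the `j = 0`
boundary relation having vanishing right-hand side), it follows that
`‖p_{4l−k−1} ψ‖ = ‖p_{4l−k} ψ‖` for all `l`, and `p_j ψ = 0` whenever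
`j ≡ 1−k` or `2−k (mod 4)`. -/
theorem stmt_17 {S : Type*} [NormedAddCommGroup S] [InnerProductSpace ℂ S]
    (p : ℕ → (S →ₗ[ℂ] S)) (ψ : S) (k : ℕ) (hk : k < 4)
    (h0 : (Complex.I + Complex.I ^ k) * (‖p 0 ψ‖ : ℂ) ^ 2 = 0)
    (hrel : ∀ j : ℕ, (Complex.I + Complex.I ^ (k + j + 1)) * (‖p (j + 1) ψ‖ : ℂ) ^ 2
      = (Complex.I + (-Complex.I) ^ (k + j + 1)) * (‖p j ψ‖ : ℂ) ^ 2) :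
    (∀ j : ℕ, (j + 1 + k) % 4 = 0 → ‖p j ψ‖ = ‖p (j + 1) ψ‖) ∧
    (∀ j : ℕ, ((j + k) % 4 = 1 ∨ (j + k) % 4 = 2) → p j ψ = 0) := by
  have hI4 : Complex.I ^ 4 = 1 := by
    rw [show (4:ℕ) = 2*2 from rfl, pow_mul, Complex.I_sq]; ring
  have hnI4 : (-Complex.I) ^ 4 = 1 := by
    rw [show (-Complex.I)^4 = Complex.I^4 by ring, hI4]
  have hpow : ∀ n : ℕ, Complex.I ^ n = Complex.I ^ (n % 4) := by
    intro n
    conv_lhs => rw [← Nat.div_add_mod n 4]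
    rw [pow_add, pow_mul, hI4, one_pow, one_mul]
  have hnpow : ∀ n : ℕ, (-Complex.I) ^ n = (-Complex.I) ^ (n % 4) := by
    intro n
    conv_lhs => rw [← Nat.div_add_mod n 4]
    rw [pow_add, pow_mul, hnI4, one_pow, one_mul]
  have hsq0 : ∀ x : S, ((‖x‖ : ℂ)) ^ 2 = 0 → x = 0 := by
    intro x hx
    have : (‖x‖ : ℂ) = 0 := by
      exact pow_eq_zero_iff (by norm_num) |>.mp hx
    rw [Complex.ofReal_eq_zero, norm_eq_zero] at this
    exact this
  -- the "residue 1" vanishing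
  have hzero1 : ∀ j : ℕ, (j + k) % 4 = 1 → p j ψ = 0 := by
    intro j hj
    cases j with
    | zero =>
      have hk1 : k = 1 := by omega
      apply hsq0
      have h0' := h0
      rw [hk1, pow_one] at h0'
      have hne : Complex.I + Complex.I ≠ 0 := by
        intro h; apply Complex.I_ne_zero
        have : (2:ℂ) * Complex.I = 0 := by rw [← h]; ring
        simpa using (mul_eq_zero.mp this).resolve_left (by norm_num)
      exact (mul_eq_zero.mp h0').resolve_left hne
    | succ m =>
      have hr := hrel m
      rw [hpow (k + m + 1), hnpow (k + m + 1), show (k + m + 1) % 4 = 1 by omega,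
        pow_one, pow_one] at hr
      rw [show Complex.I + -Complex.I = 0 by ring, zero_mul] at hr
      apply hsq0
      have hne : Complex.I + Complex.I ≠ 0 := by
        intro h; apply Complex.I_ne_zero
        have : (2:ℂ) * Complex.I = 0 := by rw [← h]; ring
        simpa using (mul_eq_zero.mp this).resolve_left (by norm_num)
      exact (mul_eq_zero.mp hr).resolve_left hne
  have hIm1ne : Complex.I + (-1 : ℂ) ≠ 0 := by
    intro h
    have := congrArg Complex.im h
    simp at this
  constructor
  · -- residue 0 : equal norms
    intro j hj
    have hr := hrel j
    rw [hpow (k + j + 1), hnpow (k + j + 1), show (k + j + 1) % 4 = 0 by omega,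
      pow_zero, pow_zero] at hr
    have hne : Complex.I + 1 ≠ 0 := by
      intro h
      have := congrArg Complex.re h
      simp at this
    have := mul_left_cancel₀ hne hr
    have h2 : ‖p (j+1) ψ‖ ^ 2 = ‖p j ψ‖ ^ 2 := by
      exact_mod_cast this
    nlinarith [norm_nonneg (p j ψ), norm_nonneg (p (j+1) ψ)]
  · intro j hj
    rcases hj with hj | hj
    · exact hzero1 j hj
    · -- residue 2
      cases j with
      | zero =>
        have hk2 : k = 2 := by omega
        apply hsq0
        have h0' := h0
        rw [hk2, Complex.I_sq] at h0'
        exact (mul_eq_zero.mp h0').resolve_left hIm1ne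
      | succ m =>
        have hr := hrel m
        rw [hpow (k + m + 1), hnpow (k + m + 1), show (k + m + 1) % 4 = 2 by omega,
          Complex.I_sq, show (-Complex.I)^2 = -1 by rw [neg_pow, Complex.I_sq]; ring] at hr
        have hm0 : p m ψ = 0 := hzero1 m (by omega)
        rw [hm0] at hr
        simp at hr
        rcases hr with hr | hr
        · exact absurd hr hIm1ne
        · exact hr
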